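/- arXiv:2512.01729 — 9 statements merged into one kernel-verified Lean document; each statement's English description precedes it below -/
import Mathlib

section
/- For any two endomorphisms f₁, f₂ of a finite-dimensional real vector space V, the codimension of the fixed subspace of the composition f₁ ∘ f₂ is at most the sum of the codimensions of the fixed subspaces of f₁ and of f₂. -/
/-- For endomorphisms `f₁ f₂` of a finite-dimensional real vector space `V`,
`cod (Fix (f₁ ∘ f₂)) ≤ cod (Fix f₁) + cod (Fix f₂)`, where `Fix f = ker (f - 1)`
and `cod U = dim V - dim U`. -/
theorem stmt_0 {V : Type*} [AddCommGroup V] [Module ℝ V] [FiniteDimensional ℝ V]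
    (f₁ f₂ : Module.End ℝ V) :
    Module.finrank ℝ V - Module.finrank ℝ (LinearMap.ker (f₁ * f₂ - 1))
      ≤ (Module.finrank ℝ V - Module.finrank ℝ (LinearMap.ker (f₁ - 1)))
        + (Module.finrank ℝ V - Module.finrank ℝ (LinearMap.ker (f₂ - 1))) := by
  have hrn : ∀ g : Module.End ℝ V,
      Module.finrank ℝ V - Module.finrank ℝ (LinearMap.ker g)
        = Module.finrank ℝ (LinearMap.range g) := by
    intro g
    have := LinearMap.finrank_range_add_finrank_ker g
    omega
  rw [hrn, hrn, hrn]
  have hsub : LinearMap.range (f₁ * f₂ - 1)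
      ≤ LinearMap.range (f₁ - 1) ⊔ LinearMap.range (f₂ - 1) := by
    rintro x ⟨v, rfl⟩
    have : (f₁ * f₂ - 1) v = (f₁ - 1) (f₂ v) + (f₂ - 1) v := by
      simp [mul_comm]
    rw [this]
    exact Submodule.add_mem_sup (LinearMap.mem_range_self _ _)
      (LinearMap.mem_range_self _ _)
  calc Module.finrank ℝ (LinearMap.range (f₁ * f₂ - 1))
      ≤ Module.finrank ℝ ↥(LinearMap.range (f₁ - 1) ⊔ LinearMap.range (f₂ - 1)) :=
        Submodule.finrank_mono hsub
    _ ≤ _ := Submodule.finrank_add_le_finrank_add_finrank _ _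
end

section
/- Let v₁, …, vₘ be linearly independent non-isotropic vectors in a finite-dimensional real vector space V with a symmetric bilinear form B. Then for any x ∈ V, the composition of reflections s_{v₁} ∘ ⋯ ∘ s_{vₘ} fixes x if and only if each reflection s_{vᵢ} fixes x. -/
/-- The reflection in a non-isotropic vector `v`: `s_v x = x - (2 B(x,v)/B(v,v)) • v`. -/
noncomputable def reflVec {V : Type*} [AddCommGroup V] [Module ℝ V]
    (B : LinearMap.BilinForm ℝ V) (v x : V) : V :=
  x - ((2 * B x v) / B v v) • v

lemma reflVec_sub_mem_span {V : Type*} [AddCommGroup V] [Module ℝ V]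
    (B : LinearMap.BilinForm ℝ V) {m : ℕ} (v : Fin m → V) (x : V) :
    ((List.ofFn fun i => reflVec B (v i)).foldr (· ∘ ·) id) x - x ∈
      Submodule.span ℝ (Set.range v) := by
  induction m generalizing x with
  | zero => simp
  | succ m ih =>
    have hrw : ((List.ofFn fun i : Fin (m+1) => reflVec B (v i)).foldr (· ∘ ·) id) x
        = reflVec B (v 0)
          (((List.ofFn fun i : Fin m => reflVec B (v i.succ)).foldr (· ∘ ·) id) x) := by
      simp [List.ofFn_succ]
    set g := ((List.ofFn fun i : Fin m => reflVec B (v i.succ)).foldr (· ∘ ·) id) with hg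
    rw [hrw, reflVec]
    have h1 : g x - x ∈ Submodule.span ℝ (Set.range v) := by
      refine Submodule.span_mono ?_ (ih (fun i => v i.succ) x)
      rintro _ ⟨i, rfl⟩; exact ⟨i.succ, rfl⟩
    have h2 : v 0 ∈ Submodule.span ℝ (Set.range v) :=
      Submodule.subset_span ⟨0, rfl⟩
    have := Submodule.sub_mem _ h1 (Submodule.smul_mem _ ((2 * B (g x) (v 0)) / B (v 0) (v 0)) h2)
    convert this using 1
    abel

/-- For linearly independent non-isotropic vectors `v₁, …, vₘ` in a finite-dimensional
real vector space with symmetric bilinear form `B`, a vector `x` is fixed by the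
composition `s_{v₁} ∘ ⋯ ∘ s_{vₘ}` iff it is fixed by each reflection `s_{vᵢ}`. -/
theorem stmt_1 {V : Type*} [AddCommGroup V] [Module ℝ V] [FiniteDimensional ℝ V]
    (B : LinearMap.BilinForm ℝ V) (hsym : ∀ x y, B x y = B y x)
    {m : ℕ} (v : Fin m → V) (hli : LinearIndependent ℝ v)
    (hiso : ∀ i, B (v i) (v i) ≠ 0) (x : V) :
    ((List.ofFn fun i => reflVec B (v i)).foldr (· ∘ ·) id) x = x ↔
      ∀ i, reflVec B (v i) x = x := by
  induction m generalizing x with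
  | zero =>
    simp [Fin.forall_fin_zero_pi]
  | succ m ih =>
    have hrw : ((List.ofFn fun i : Fin (m+1) => reflVec B (v i)).foldr (· ∘ ·) id) x
        = reflVec B (v 0)
          (((List.ofFn fun i : Fin m => reflVec B (v i.succ)).foldr (· ∘ ·) id) x) := by
      simp [List.ofFn_succ]
    set g := ((List.ofFn fun i : Fin m => reflVec B (v i.succ)).foldr (· ∘ ·) id) with hgdef
    have hlit : LinearIndependent ℝ (fun i : Fin m => v i.succ) :=
      hli.comp Fin.succ (Fin.succ_injective m)
    have htail := ih (fun i => v i.succ) hlit (fun i => hiso i.succ)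
    have hnotmem : v 0 ∉ Submodule.span ℝ (Set.range fun i : Fin m => v i.succ) := by
      have : LinearIndependent ℝ (Fin.cons (v 0) (Fin.tail v) : Fin (m+1) → V) := by
        rwa [Fin.cons_self_tail]
      exact (linearIndependent_fin_cons.mp this).2
    constructor
    · intro h
      rw [hrw, reflVec] at h
      set c := (2 * B (g x) (v 0)) / B (v 0) (v 0) with hc
      have heq : g x - x = c • v 0 := by
        have : g x - c • v 0 = x := h
        linear_combination (norm := module) this
      have hmem : g x - x ∈ Submodule.span ℝ (Set.range fun i : Fin m => v i.succ) :=
        reflVec_sub_mem_span B (fun i => v i.succ) x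
      have hc0 : c = 0 := by
        by_contra hc0
        apply hnotmem
        have : v 0 = c⁻¹ • (g x - x) := by
          rw [heq, smul_smul, inv_mul_cancel₀ hc0, one_smul]
        rw [this]
        exact Submodule.smul_mem _ _ hmem
      have hgx : g x = x := by
        have := heq
        rw [hc0, zero_smul, sub_eq_zero] at this
        exact this
      have htail' := (htail x).mp hgx
      intro i
      refine Fin.cases ?_ (fun j => htail' j) i
      rw [reflVec]
      have hc' : (2 * B x (v 0)) / B (v 0) (v 0) = 0 := by rw [← hgx]; exact hc0
      rw [hc', zero_smul, sub_zero]
    · intro h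
      have hgx : g x = x := (htail x).mpr fun j => h j.succ
      rw [hrw, hgx]
      exact h 0
end

section
/- Let (v₁, …, vₙ) be a basis of a finite-dimensional real vector space V consisting of vectors that are non-isotropic with respect to a symmetric bilinear form B, and let c = s_{v₁} ∘ ⋯ ∘ s_{vₙ}. Then the fixed subspace of c equals the radical of B; in particular cod(Fix(c)) = n − dim(Rad(B)). -/
/-!
Write `c = s_{v₀} ∘ c'` with `c' = s_{v₁} ∘ ⋯ ∘ s_{vₙ₋₁}`. Every reflection moves a point along
its own vector, so `c' x - x` lies in the span of `v₁, …, vₙ₋₁`, whereas `s_{v₀}` moves `c' x`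
by a multiple of `v₀`. If `c x = x`, these two displacements cancel, and linear independence
forces both to vanish: `c' x = x` and `B(x, v₀) = 0`. By induction `B(x, vᵢ) = 0` for all `i`,
i.e. `x ∈ Rad B`.
-/

open Submodule Set

section Reflections

variable {V : Type*} [AddCommGroup V] [Module ℝ V] (B : LinearMap.BilinForm ℝ V)

noncomputable def reflProd {n : ℕ} (v : Fin n → V) : V → V :=
  (List.ofFn fun i => reflVec B (v i)).foldr (· ∘ ·) id

lemma reflVec_eq_self_iff {u : V} (hu : B u u ≠ 0) (x : V) :
    reflVec B u x = x ↔ B x u = 0 := by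
  have hu0 : u ≠ 0 := by rintro rfl; simp at hu
  simp [reflVec, hu, hu0]

lemma eq_of_reflVec_eq {p : Submodule ℝ V} {u x y : V} (hu : u ∉ p) (hyx : y - x ∈ p)
    (h : reflVec B u y = x) : y = x := by
  set a := 2 * B y u / B u u
  have hdiff : y - x = a • u := by rw [← h, reflVec]; abel
  by_cases ha : a = 0
  · rwa [ha, zero_smul, sub_eq_zero] at hdiff
  · refine absurd ?_ hu
    rw [← inv_smul_smul₀ ha u, ← hdiff]
    exact p.smul_mem _ hyx

lemma reflProd_zero (v : Fin 0 → V) : reflProd B v = id := rfl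

lemma reflProd_succ {n : ℕ} (v : Fin (n + 1) → V) (x : V) :
    reflProd B v x = reflVec B (v 0) (reflProd B (Fin.tail v) x) := by
  simp only [reflProd, List.ofFn_succ, List.foldr_cons, Function.comp_apply]
  rfl

lemma reflProd_sub_mem_span {n : ℕ} (v : Fin n → V) (x : V) :
    reflProd B v x - x ∈ span ℝ (range v) := by
  induction n with
  | zero => simp [reflProd_zero]
  | succ n ih =>
    set y := reflProd B (Fin.tail v) x
    have hstep : reflVec B (v 0) y - x = (y - x) - (2 * B y (v 0) / B (v 0) (v 0)) • v 0 := by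
      rw [reflVec]; abel
    rw [reflProd_succ, hstep]
    exact sub_mem (span_mono (range_comp_subset_range Fin.succ v) (ih _))
      (smul_mem _ _ (subset_span (mem_range_self 0)))

lemma reflProd_eq_self_iff {n : ℕ} {v : Fin n → V} (hv : LinearIndependent ℝ v)
    (hiso : ∀ i, B (v i) (v i) ≠ 0) (x : V) :
    reflProd B v x = x ↔ ∀ i, B x (v i) = 0 := by
  induction n with
  | zero => simp [reflProd_zero]
  | succ n ih =>
    rw [linearIndependent_finSucc] at hv
    have ih' := ih hv.1 (fun i => hiso i.succ)
    rw [reflProd_succ, Fin.forall_fin_succ]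
    constructor
    · intro h
      have hfix := eq_of_reflVec_eq B hv.2 (reflProd_sub_mem_span B _ x) h
      rw [hfix] at h
      exact ⟨(reflVec_eq_self_iff B (hiso 0) x).1 h, ih'.1 hfix⟩
    · rintro ⟨h0, hrest⟩
      rw [ih'.2 hrest]
      exact (reflVec_eq_self_iff B (hiso 0) x).2 h0

end Reflections

lemma LinearMap.BilinForm.mem_ker_iff_basis {R V ι : Type*} [CommSemiring R] [AddCommMonoid V]
    [Module R V] (B : LinearMap.BilinForm R V) (v : Module.Basis ι R V) (x : V) :
    x ∈ LinearMap.ker B ↔ ∀ i, B x (v i) = 0 :=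
  ⟨fun hx i => by rw [LinearMap.mem_ker.1 hx, LinearMap.zero_apply],
    fun hx => v.ext fun i => hx i⟩

theorem stmt_2_general {V : Type*} [AddCommGroup V] [Module ℝ V]
    (B : LinearMap.BilinForm ℝ V)
    {n : ℕ} (v : Module.Basis (Fin n) ℝ V) (hiso : ∀ i, B (v i) (v i) ≠ 0) :
    {x : V | ((List.ofFn fun i => reflVec B (v i)).foldr (· ∘ ·) id) x = x}
        = (LinearMap.ker B : Set V)
      ∧ Module.finrank ℝ V - Module.finrank ℝ (LinearMap.ker B)
          = n - Module.finrank ℝ (LinearMap.ker B) := by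
  refine ⟨Set.ext fun x => ?_, by rw [Module.finrank_eq_card_basis v, Fintype.card_fin]⟩
  exact (reflProd_eq_self_iff B v.linearIndependent hiso x).trans
    (B.mem_ker_iff_basis v x).symm

/-- If `(v₁, …, vₙ)` is a basis of `V` consisting of non-isotropic vectors (for a
symmetric bilinear form `B`) and `c = s_{v₁} ∘ ⋯ ∘ s_{vₙ}`, then `Fix(c) = Rad(B)`;
in particular `cod (Fix c) = n - dim (Rad B)`. Here `Rad B = ker B`. -/
theorem stmt_2 {V : Type*} [AddCommGroup V] [Module ℝ V] [FiniteDimensional ℝ V]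
    (B : LinearMap.BilinForm ℝ V) (hsym : ∀ x y, B x y = B y x)
    {n : ℕ} (v : Module.Basis (Fin n) ℝ V) (hiso : ∀ i, B (v i) (v i) ≠ 0) :
    {x : V | ((List.ofFn fun i => reflVec B (v i)).foldr (· ∘ ·) id) x = x}
        = (LinearMap.ker B : Set V)
      ∧ Module.finrank ℝ V - Module.finrank ℝ (LinearMap.ker B)
          = n - Module.finrank ℝ (LinearMap.ker B) :=
  stmt_2_general B v hiso
end

section
/- Let G be a group, T ⊆ G a subset closed under conjugation, and t₁,…,tₘ, t ∈ T with t² = 1. Then for any x in the subgroup generated by t₁,…,tₘ, the tuple (t₁,…,tₘ, x t x⁻¹, x t x⁻¹) lies in the same Hurwitz orbit (under the braid group B_{m+2}) as (t₁,…,tₘ, t, t). -/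
/-- The Hurwitz move `σᵢ` (0-based indices). -/
def hurwitzMove {G : Type*} [Group G] {r : ℕ} (i : ℕ) (h : i + 1 < r)
    (g : Fin r → G) : Fin r → G := fun j =>
  if (j : ℕ) = i then g ⟨i + 1, h⟩
  else if (j : ℕ) = i + 1 then
    (g ⟨i + 1, h⟩)⁻¹ * g ⟨i, Nat.lt_of_succ_lt h⟩ * g ⟨i + 1, h⟩
  else g j

/-- The inverse Hurwitz move `σᵢ⁻¹` (0-based indices). -/
def hurwitzMoveInv {G : Type*} [Group G] {r : ℕ} (i : ℕ) (h : i + 1 < r)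
    (g : Fin r → G) : Fin r → G := fun j =>
  if (j : ℕ) = i then
    g ⟨i, Nat.lt_of_succ_lt h⟩ * g ⟨i + 1, h⟩ * (g ⟨i, Nat.lt_of_succ_lt h⟩)⁻¹
  else if (j : ℕ) = i + 1 then g ⟨i, Nat.lt_of_succ_lt h⟩
  else g j

/-!
If `c * c = 1`, the moves `σₖ` then `σₖ₊₁` take `(…, s, c, c, …)` to `(…, c, c, s, …)`: `s` is
conjugated by `c²`, i.e. not at all. So the pair `(c, c)` slides freely along the tuple. On the
other hand `σₖ₊₁` then `σₖ` take `(…, c, c, s, …)` to `(…, s, s⁻¹cs, s⁻¹cs, …)`. Sliding the pair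
from the end to just after `tᵢ`, undoing this second move, and sliding back conjugates `c` by `tᵢ`.
The `x` that conjugate every such end pair within its Hurwitz orbit form a subgroup.
-/

open Relation

section Hurwitz

variable {G : Type*} [Group G] {r : ℕ}

theorem conj_mul_self_eq_one {c : G} (x : G) (hc : c * c = 1) :
    x * c * x⁻¹ * (x * c * x⁻¹) = 1 := by
  rw [conj_mul, hc, mul_one, mul_inv_cancel]

theorem hurwitzMoveInv_hurwitzMove (i : ℕ) (h : i + 1 < r) (g : Fin r → G) :
    hurwitzMoveInv i h (hurwitzMove i h g) = g := by
  ext ⟨j, hj⟩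
  simp only [hurwitzMove, hurwitzMoveInv]
  split_ifs <;> subst_vars <;> first | omega | rfl | group

theorem hurwitzMove_hurwitzMoveInv (i : ℕ) (h : i + 1 < r) (g : Fin r → G) :
    hurwitzMove i h (hurwitzMoveInv i h g) = g := by
  ext ⟨j, hj⟩
  simp only [hurwitzMove, hurwitzMoveInv]
  split_ifs <;> subst_vars <;> first | omega | rfl | group

def HurwitzStep (g g' : Fin r → G) : Prop :=
  ∃ (i : ℕ) (h : i + 1 < r), g' = hurwitzMove i h g ∨ g' = hurwitzMoveInv i h g

instance : Std.Symm (HurwitzStep (G := G) (r := r)) where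
  symm g _ := by
    rintro ⟨i, h, rfl | rfl⟩
    · exact ⟨i, h, .inr (hurwitzMoveInv_hurwitzMove i h g).symm⟩
    · exact ⟨i, h, .inl (hurwitzMove_hurwitzMoveInv i h g).symm⟩

theorem reflTransGen_hurwitzMove_hurwitzMove (g : Fin r → G) {i j : ℕ}
    (hi : i + 1 < r) (hj : j + 1 < r) :
    ReflTransGen HurwitzStep g (hurwitzMove j hj (hurwitzMove i hi g)) :=
  .tail (.single ⟨i, hi, .inl rfl⟩) ⟨j, hj, .inl rfl⟩

end Hurwitz

section InsertPair

variable {α : Type*} {m : ℕ}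

-- `ts` with `c, c` inserted at the 0-based positions `k, k + 1`.
def insertPair (ts : Fin m → α) (c : α) (k : ℕ) : Fin (m + 2) → α := fun j =>
  if h : (j : ℕ) < k ∧ (j : ℕ) < m then ts ⟨j, h.2⟩
  else if _ : (j : ℕ) < k + 2 then c
  else ts ⟨(j : ℕ) - 2, by have := j.isLt; omega⟩

theorem insertPair_self (ts : Fin m → α) (c : α) :
    insertPair ts c m = Fin.snoc (Fin.snoc ts c) c := by
  ext ⟨j, hj⟩
  simp only [insertPair, Fin.snoc, Fin.castLT, Fin.castSucc, Fin.castAdd, Fin.castLE]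
  split_ifs <;> simp_all <;> omega

end InsertPair

section PairMoves

variable {G : Type*} [Group G] {m : ℕ} (ts : Fin m → G)

theorem hurwitzMove_succ_hurwitzMove_insertPair_succ {c : G} (hc : c * c = 1) {k : ℕ}
    (hk : k < m) :
    hurwitzMove (k + 1) (by omega) (hurwitzMove k (by omega) (insertPair ts c (k + 1)))
      = insertPair ts c k := by
  have hc_inv : c⁻¹ = c := inv_eq_of_mul_eq_one_right hc
  ext ⟨j, hj⟩
  simp only [hurwitzMove, insertPair]
  split_ifs <;> subst_vars <;>
    first | omega | rfl | simp [hc_inv, ← mul_assoc, hc, mul_assoc (ts _)]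

theorem hurwitzMove_hurwitzMove_succ_insertPair (c : G) (i : Fin m) :
    hurwitzMove i (by omega) (hurwitzMove (i + 1) (by omega) (insertPair ts c i))
      = insertPair ts ((ts i)⁻¹ * c * ts i) (i + 1) := by
  ext ⟨j, hj⟩
  simp only [hurwitzMove, insertPair]
  split_ifs <;> subst_vars <;> first | omega | rfl

theorem reflTransGen_insertPair {c : G} (hc : c * c = 1) {k l : ℕ} (hk : k ≤ m) (hl : l ≤ m) :
    ReflTransGen HurwitzStep (insertPair ts c k) (insertPair ts c l) := by
  have reach_zero : ∀ k ≤ m, ReflTransGen HurwitzStep (insertPair ts c k) (insertPair ts c 0) := by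
    intro k hk
    induction k with
    | zero => exact .refl
    | succ k ih =>
      rw [← hurwitzMove_succ_hurwitzMove_insertPair_succ ts hc hk] at ih
      exact .trans (reflTransGen_hurwitzMove_hurwitzMove _ _ _) (ih (by omega))
  exact (reach_zero k hk).trans (symm (reach_zero l hl))

theorem reflTransGen_insertPair_conj {c : G} (hc : c * c = 1) (i : Fin m) :
    ReflTransGen HurwitzStep (insertPair ts c m) (insertPair ts (ts i * c * (ts i)⁻¹) m) := by
  have move := hurwitzMove_hurwitzMove_succ_insertPair ts (ts i * c * (ts i)⁻¹) i
  rw [show (ts i)⁻¹ * (ts i * c * (ts i)⁻¹) * ts i = c by group] at move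
  refine (reflTransGen_insertPair ts hc le_rfl i.is_lt).trans (.trans (symm ?_)
    (reflTransGen_insertPair ts (conj_mul_self_eq_one _ hc) i.is_lt.le le_rfl))
  rw [← move]
  exact reflTransGen_hurwitzMove_hurwitzMove _ _ _

end PairMoves

theorem stmt_8_general {G : Type*} [Group G]
    (m : ℕ) (ts : Fin m → G)
    (t : G) (ht2 : t * t = 1)
    (x : G) (hx : x ∈ Subgroup.closure (Set.range ts)) :
    Relation.ReflTransGen
      (fun g g' : Fin (m + 2) → G =>
        ∃ (i : ℕ) (h : i + 1 < m + 2), g' = hurwitzMove i h g ∨ g' = hurwitzMoveInv i h g)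
      (Fin.snoc (Fin.snoc ts t) t)
      (Fin.snoc (Fin.snoc ts (x * t * x⁻¹)) (x * t * x⁻¹)) := by
  rw [← insertPair_self, ← insertPair_self]
  suffices h : ∀ c : G, c * c = 1 →
      ReflTransGen HurwitzStep (insertPair ts c m) (insertPair ts (x * c * x⁻¹) m) from h t ht2
  induction hx using Subgroup.closure_induction with
  | one => exact fun c _ => by simpa using .refl
  | mem s hs =>
    obtain ⟨i, rfl⟩ := hs
    exact fun c hc => reflTransGen_insertPair_conj ts hc i
  | mul y z _ _ ihy ihz =>
    intro c hc
    have h := (ihz c hc).trans (ihy _ (conj_mul_self_eq_one z hc))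
    rwa [show y * (z * c * z⁻¹) * y⁻¹ = y * z * c * (y * z)⁻¹ by group] at h
  | inv y _ ih =>
    intro c hc
    have h := ih _ (conj_mul_self_eq_one y⁻¹ hc)
    rw [show y * (y⁻¹ * c * y⁻¹⁻¹) * y⁻¹ = c by group] at h
    exact symm h

/-- Let `G` be a group, `T ⊆ G` closed under conjugation, `t₁,…,tₘ, t ∈ T` with `t² = 1`.
For any `x` in the subgroup generated by `t₁,…,tₘ`, the tuple `(t₁,…,tₘ, x t x⁻¹, x t x⁻¹)`
lies in the same Hurwitz orbit (under `B_{m+2}`) as `(t₁,…,tₘ, t, t)`. -/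
theorem stmt_8 {G : Type*} [Group G] (T : Set G)
    (hT : ∀ g t, t ∈ T → g * t * g⁻¹ ∈ T)
    (m : ℕ) (ts : Fin m → G) (hts : ∀ i, ts i ∈ T)
    (t : G) (ht : t ∈ T) (ht2 : t * t = 1)
    (x : G) (hx : x ∈ Subgroup.closure (Set.range ts)) :
    Relation.ReflTransGen
      (fun g g' : Fin (m + 2) → G =>
        ∃ (i : ℕ) (h : i + 1 < m + 2), g' = hurwitzMove i h g ∨ g' = hurwitzMoveInv i h g)
      (Fin.snoc (Fin.snoc ts t) t)
      (Fin.snoc (Fin.snoc ts (x * t * x⁻¹)) (x * t * x⁻¹)) :=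
  stmt_8_general m ts t ht2 x hx
end

section
/- Let (Γ,K) be a bilinear lattice admitting a complete exceptional sequence. Then the set of pseudo-roots is reduced: if α and β are pseudo-roots with s_α = s_β (as automorphisms of Γ), then α = ±β. -/
/-- `α` is a pseudo-root of the bilinear lattice `(Γ, K)`:
`⟨α,α⟩ > 0` and `⟨α,γ⟩/⟨α,α⟩, ⟨γ,α⟩/⟨α,α⟩ ∈ ℤ` for all `γ`. -/
def IsPseudoRootK {Γ : Type*} [AddCommGroup Γ] [Module ℤ Γ]
    (K : Γ →ₗ[ℤ] Γ →ₗ[ℤ] ℤ) (α : Γ) : Prop :=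
  0 < K α α ∧ ∀ γ : Γ, K α α ∣ K α γ ∧ K α α ∣ K γ α

/-- The reflection at a pseudo-root `α`:
`s_α γ = γ − (⟨γ,α⟩ + ⟨α,γ⟩)/⟨α,α⟩ • α` (the quotient is an exact integer division). -/
def latRefl {Γ : Type*} [AddCommGroup Γ] [Module ℤ Γ]
    (K : Γ →ₗ[ℤ] Γ →ₗ[ℤ] ℤ) (α γ : Γ) : Γ :=
  γ - ((K γ α + K α γ) / K α α) • α

/-- Cancellation of `2 •` in a torsion-free `ℤ`-module. -/
lemma aux_two_smul_cancel {Γ : Type*} [AddCommGroup Γ] [Module ℤ Γ]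
    [Module.Free ℤ Γ] {x y : Γ} (h : (2:ℤ) • x = (2:ℤ) • y) : x = y := by
  rw [← Int.cast_smul_eq_zsmul ℤ, ← Int.cast_smul_eq_zsmul ℤ] at h
  exact smul_right_injective Γ (by norm_num : ((2:ℤ):ℤ) ≠ 0) h

/-- In a bilinear lattice admitting a complete exceptional sequence, the set of
pseudo-roots is reduced: if `s_α = s_β` for pseudo-roots `α, β`, then `α = ±β`. -/
theorem stmt_10 {Γ : Type*} [AddCommGroup Γ] [Module ℤ Γ]
    [Module.Free ℤ Γ] [Module.Finite ℤ Γ]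
    (K : Γ →ₗ[ℤ] Γ →ₗ[ℤ] ℤ)
    (hnd₁ : ∀ α : Γ, (∀ β, K α β = 0) → α = 0)
    (hnd₂ : ∀ β : Γ, (∀ α, K α β = 0) → β = 0)
    {n : ℕ} (γ : Fin n → Γ) (hpr : ∀ i, IsPseudoRootK K (γ i))
    (horth : ∀ i j : Fin n, j < i → K (γ i) (γ j) = 0)
    (hspan : Submodule.span ℤ (Set.range γ) = ⊤)
    (α β : Γ) (hα : IsPseudoRootK K α) (hβ : IsPseudoRootK K β)
    (heq : ∀ x, latRefl K α x = latRefl K β x) :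
    α = β ∨ α = -β := by

  obtain ⟨ha, hαint⟩ := hα
  obtain ⟨hb, hβint⟩ := hβ
  have ha0 : K α α ≠ 0 := ha.ne'
  have hb0 : K β β ≠ 0 := hb.ne'
  have hAA : latRefl K α α = -α := by
    unfold latRefl
    rw [show K α α + K α α = 2 * (K α α) by ring, Int.mul_ediv_cancel _ ha0,
      two_zsmul]
    abel
  set c : ℤ := (K α β + K β α) / (K β β) with hc
  set c' : ℤ := (K β α + K α β) / (K α α) with hc'
  have h1 : c • β = (2:ℤ) • α := by
    have h := heq α
    rw [hAA] at h
    unfold latRefl at h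
    rw [hc]
    rw [eq_sub_iff_add_eq] at h
    have h2 : α + (-α + ((K α β + K β α) / K β β) • β) = α + α := by rw [h]
    rw [two_zsmul, ← h2]
    abel
  have hBB : latRefl K β β = -β := by
    unfold latRefl
    rw [show K β β + K β β = 2 * (K β β) by ring, Int.mul_ediv_cancel _ hb0,
      two_zsmul]
    abel
  have h2 : c' • α = (2:ℤ) • β := by
    have h := (heq β).symm
    rw [hBB] at h
    unfold latRefl at h
    rw [hc']
    rw [eq_sub_iff_add_eq] at h
    have h2 : β + (-β + ((K β α + K α β) / K α α) • α) = β + β := by rw [h]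
    rw [two_zsmul, ← h2]
    abel
  have hcb : c * K β β = K α β + K β α :=
    Int.ediv_mul_cancel (dvd_add (hβint α).2 (hβint α).1)
  have hca : c' * K α α = K β α + K α β :=
    Int.ediv_mul_cancel (dvd_add (hαint β).2 (hαint β).1)
  -- apply K β to h1 and K α to h2
  have e1 : c * K β β = 2 * K β α := by
    have := congrArg (K β) h1
    simpa [map_smul, smul_eq_mul] using this
  have e2 : c' * K α α = 2 * K α β := by
    have := congrArg (K α) h2
    simpa [map_smul, smul_eq_mul] using this
  obtain ⟨k, hk⟩ : K β β ∣ K β α := (hβint α).1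
  obtain ⟨k', hk'⟩ : K α α ∣ K α β := (hαint β).1
  have hck : c = 2 * k := by
    have : c * K β β = (2 * k) * K β β := by rw [e1, hk]; ring
    exact mul_right_cancel₀ hb0 this
  have hck' : c' = 2 * k' := by
    have : c' * K α α = (2 * k') * K α α := by rw [e2, hk']; ring
    exact mul_right_cancel₀ ha0 this
  have e3 : c' * K β α = 2 * K β β := by
    have := congrArg (K β) h2
    simpa [map_smul, smul_eq_mul] using this
  have hkk : k * k' = 1 := by
    have h5 : (2 * k') * (K β β * k) = 2 * K β β := by rw [← hck', ← hk]; exact e3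
    have h6 : K β β * (2 * (k * k')) = K β β * 2 := by linear_combination h5
    have := mul_left_cancel₀ hb0 h6
    omega
  rcases Int.mul_eq_one_iff_eq_one_or_neg_one.mp hkk with ⟨hk1, _⟩ | ⟨hk1, _⟩
  · left
    have hc2 : c = 2 := by rw [hck, hk1]; ring
    rw [hc2] at h1
    exact (aux_two_smul_cancel h1).symm
  · right
    have hc2 : c = -2 := by rw [hck, hk1]; ring
    have h1' : (2:ℤ) • (-β) = (2:ℤ) • α := by
      rw [← h1, hc2, neg_zsmul, two_zsmul, two_zsmul]
      abel
    exact (aux_two_smul_cancel h1').symm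
end

section
/- Let (Γ,K) be a bilinear lattice with a complete exceptional sequence (γ₁,…,γₙ). Then c := s_{γ₁} ∘ ⋯ ∘ s_{γₙ} is a Coxeter element, i.e., ⟨α,β⟩ + ⟨β,c(α)⟩ = 0 for all α,β ∈ Γ. -/
namespace latRefl

variable {Γ : Type*} [AddCommGroup Γ] [Module ℤ Γ] (K : Γ →ₗ[ℤ] Γ →ₗ[ℤ] ℤ)

def reflComp (l : List Γ) : Γ → Γ :=
  (l.map (latRefl K)).foldr (· ∘ ·) id

@[simp] lemma reflComp_nil : reflComp K [] = id := rfl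

@[simp] lemma reflComp_cons (v : Γ) (l : List Γ) :
    reflComp K (v :: l) = latRefl K v ∘ reflComp K l := rfl

lemma reflComp_append (l₁ l₂ : List Γ) :
    reflComp K (l₁ ++ l₂) = reflComp K l₁ ∘ reflComp K l₂ := by
  induction l₁ with
  | nil => rfl
  | cons v l ih => rw [List.cons_append, reflComp_cons, reflComp_cons, ih, Function.comp_assoc]

variable {K}

lemma apply_left_of_orthogonal {v u : Γ} (h : K v u = 0) (x : Γ) :
    K (latRefl K v x) u = K x u := by
  simp [latRefl, h]

lemma apply_right_of_orthogonal {v u : Γ} (h : K u v = 0) (x : Γ) :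
    K u (latRefl K v x) = K u x := by
  simp [latRefl, h]

lemma apply_right_self {v : Γ} (hv : IsPseudoRootK K v) (x : Γ) :
    K v (latRefl K v x) = -K x v := by
  have hdiv : (K x v + K v x) / K v v * K v v = K x v + K v x :=
    Int.ediv_mul_cancel (dvd_add (hv.2 x).2 (hv.2 x).1)
  rw [latRefl, map_sub, map_zsmul, smul_eq_mul, hdiv]
  ring

lemma reflComp_apply_left_of_orthogonal {l : List Γ} {u : Γ} (h : ∀ v ∈ l, K v u = 0)
    (x : Γ) : K (reflComp K l x) u = K x u := by
  induction l with
  | nil => rfl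
  | cons v l ih =>
    rw [reflComp_cons, Function.comp_apply, apply_left_of_orthogonal (h v List.mem_cons_self),
      ih fun w hw => h w (List.mem_cons_of_mem v hw)]

lemma reflComp_apply_right_of_orthogonal {l : List Γ} {u : Γ} (h : ∀ v ∈ l, K u v = 0)
    (x : Γ) : K u (reflComp K l x) = K u x := by
  induction l with
  | nil => rfl
  | cons v l ih =>
    rw [reflComp_cons, Function.comp_apply, apply_right_of_orthogonal (h v List.mem_cons_self),
      ih fun w hw => h w (List.mem_cons_of_mem v hw)]

lemma reflComp_append_cons_apply_right_self {l₁ l₂ : List Γ} {v : Γ} (hv : IsPseudoRootK K v)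
    (h₁ : ∀ w ∈ l₁, K v w = 0) (h₂ : ∀ w ∈ l₂, K w v = 0) (x : Γ) :
    K v (reflComp K (l₁ ++ v :: l₂) x) = -K x v := by
  rw [reflComp_append, Function.comp_apply, reflComp_apply_right_of_orthogonal h₁,
    reflComp_cons, Function.comp_apply, apply_right_self hv,
    reflComp_apply_left_of_orthogonal h₂]

lemma reflComp_ofFn_apply_right_of_exceptional {n : ℕ} {γ : Fin n → Γ}
    (hpr : ∀ i, IsPseudoRootK K (γ i)) (horth : ∀ i j : Fin n, j < i → K (γ i) (γ j) = 0)
    (m : Fin n) (x : Γ) : K (γ m) (reflComp K (List.ofFn γ) x) = -K x (γ m) := by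
  obtain ⟨l₁, l₂, hl⟩ := List.append_of_mem (List.mem_finRange m)
  have hsorted := List.pairwise_lt_finRange n
  rw [hl, List.pairwise_append, List.pairwise_cons] at hsorted
  obtain ⟨-, ⟨hlt₂, -⟩, hlt₁⟩ := hsorted
  rw [List.ofFn_eq_map, hl, List.map_append, List.map_cons]
  refine reflComp_append_cons_apply_right_self (hpr m) ?_ ?_ x
  · simp only [List.mem_map]
    rintro _ ⟨i, hi, rfl⟩
    exact horth m i (hlt₁ i hi m List.mem_cons_self)
  · simp only [List.mem_map]
    rintro _ ⟨i, hi, rfl⟩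
    exact horth i m (hlt₂ i hi)

end latRefl

open latRefl in
theorem stmt_11_general {Γ : Type*} [AddCommGroup Γ] [Module ℤ Γ]
    (K : Γ →ₗ[ℤ] Γ →ₗ[ℤ] ℤ)
    {n : ℕ} (γ : Fin n → Γ) (hpr : ∀ i, IsPseudoRootK K (γ i))
    (horth : ∀ i j : Fin n, j < i → K (γ i) (γ j) = 0)
    (hspan : Submodule.span ℤ (Set.range γ) = ⊤) :
    ∀ α β : Γ,
      K α β + K β (((List.ofFn fun i => latRefl K (γ i)).foldr (· ∘ ·) id) α) = 0 := by
  intro α β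
  have hc : (List.ofFn fun i => latRefl K (γ i)).foldr (· ∘ ·) id = reflComp K (List.ofFn γ) := by
    rw [reflComp, List.map_ofFn]
    rfl
  have hzero : K α + K.flip (reflComp K (List.ofFn γ) α) = 0 := by
    refine LinearMap.ext_on hspan ?_
    rintro _ ⟨m, rfl⟩
    rw [LinearMap.add_apply, LinearMap.flip_apply,
      reflComp_ofFn_apply_right_of_exceptional hpr horth, add_neg_cancel, LinearMap.zero_apply]
  simpa [hc] using LinearMap.congr_fun hzero β

/-- For a bilinear lattice `(Γ,K)` with a complete exceptional sequence `(γ₁,…,γₙ)`,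
the composition `c = s_{γ₁} ∘ ⋯ ∘ s_{γₙ}` is a Coxeter element:
`⟨α,β⟩ + ⟨β, c α⟩ = 0` for all `α, β ∈ Γ`. -/
theorem stmt_11 {Γ : Type*} [AddCommGroup Γ] [Module ℤ Γ]
    [Module.Free ℤ Γ] [Module.Finite ℤ Γ]
    (K : Γ →ₗ[ℤ] Γ →ₗ[ℤ] ℤ)
    (hnd₁ : ∀ α : Γ, (∀ β, K α β = 0) → α = 0)
    (hnd₂ : ∀ β : Γ, (∀ α, K α β = 0) → β = 0)
    {n : ℕ} (γ : Fin n → Γ) (hpr : ∀ i, IsPseudoRootK K (γ i))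
    (horth : ∀ i j : Fin n, j < i → K (γ i) (γ j) = 0)
    (hspan : Submodule.span ℤ (Set.range γ) = ⊤) :
    ∀ α β : Γ,
      K α β + K β (((List.ofFn fun i => latRefl K (γ i)).foldr (· ∘ ·) id) α) = 0 :=
  stmt_11_general K γ hpr horth hspan
end

section
/- Let V be a finite-dimensional real vector space with symmetric bilinear form B, let γ₁,…,γₙ ∈ V be non-isotropic, let a ∈ Rad(B), and let m₁,…,mₙ ∈ ℤ. Then for any x ∈ V: s_{γₙ+mₙa} ∘ ⋯ ∘ s_{γ₁+m₁a}(x) = s_{γₙ} ∘ ⋯ ∘ s_{γ₁}(x) − ( Σᵢ mᵢ · B(x, s_{γ₁}⋯s_{γ_{i−1}}(γᵢ^♯)) ) · a, where γ^♯ = (2/B(γ,γ))·γ. -/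
/-- The dual vector `v^♯ = (2 / B(v,v)) • v`. -/
noncomputable def sharpVec {V : Type*} [AddCommGroup V] [Module ℝ V]
    (B : LinearMap.BilinForm ℝ V) (v : V) : V :=
  (2 / B v v) • v

/-!
Since `a` lies in the radical, `s_{γ+ma} y = s_γ y − m B(y, γ^♯) a`, and every `s_γ` fixes `a`
and commutes with translation by multiples of `a`. Peeling off the first reflection, the
correction term `m₁ B(x, γ₁^♯) a` passes unchanged through the remaining reflections, and the
induction hypothesis applied at `s_{γ₁} x` produces the terms `mᵢ B(s_{γ₁} x, ⋯)`, which
self-adjointness of `s_{γ₁}` turns into `mᵢ B(x, s_{γ₁} ⋯)`.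
-/

namespace List

variable {α : Type*}

theorem foldl_comp_eq_comp (L : List (α → α)) (g : α → α) :
    L.foldl (fun acc f => f ∘ acc) g = L.foldl (fun acc f => f ∘ acc) id ∘ g := by
  induction L generalizing g with
  | nil => rfl
  | cons F L ih => rw [foldl_cons, foldl_cons, ih (F ∘ g), ih (F ∘ id), Function.comp_id,
      Function.comp_assoc]

theorem foldl_comp_cons (F : α → α) (L : List (α → α)) :
    (F :: L).foldl (fun acc f => f ∘ acc) id = L.foldl (fun acc f => f ∘ acc) id ∘ F :=
  foldl_comp_eq_comp L (F ∘ id)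

theorem foldl_comp_apply_sub [Sub α] (L : List (α → α)) (b : α)
    (h : ∀ F ∈ L, ∀ y, F (y - b) = F y - b) (y : α) :
    L.foldl (fun acc f => f ∘ acc) id (y - b) = L.foldl (fun acc f => f ∘ acc) id y - b := by
  induction L generalizing y with
  | nil => rfl
  | cons F L ih =>
    simp only [foldl_comp_cons, Function.comp_apply, h F mem_cons_self,
      ih (fun F hF => h F (mem_cons_of_mem _ hF))]

end List

section Reflection

variable {V : Type*} [AddCommGroup V] [Module ℝ V] (B : LinearMap.BilinForm ℝ V)

theorem reflVec_sub_smul {a v : V} (hav : B a v = 0) (y : V) (c : ℝ) :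
    reflVec B v (y - c • a) = reflVec B v y - c • a := by
  simp only [reflVec, map_sub, map_smul, LinearMap.sub_apply, LinearMap.smul_apply, hav,
    smul_zero, sub_zero, sub_right_comm]

theorem reflVec_apply_left (hsym : ∀ x y, B x y = B y x) (γ y z : V) :
    B (reflVec B γ y) z = B y (reflVec B γ z) := by
  simp only [reflVec, map_sub, map_smul, LinearMap.sub_apply, LinearMap.smul_apply,
    smul_eq_mul]
  rw [hsym γ z, hsym y γ]
  ring

theorem reflVec_add_zsmul (hsym : ∀ x y, B x y = B y x) {a : V} (ha : ∀ w, B a w = 0)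
    (γ : V) (m : ℤ) (y : V) :
    reflVec B (γ + m • a) y = reflVec B γ y - ((m : ℝ) * B y (sharpVec B γ)) • a := by
  have hya : ∀ w, B w a = 0 := fun w => hsym w a ▸ ha w
  have hyγ : B y (γ + m • a) = B y γ := by simp [hya]
  have hγγ : B (γ + m • a) (γ + m • a) = B γ γ := by simp [ha, hya]
  rw [reflVec, reflVec, sharpVec, hyγ, hγγ, ← Int.cast_smul_eq_zsmul ℝ, smul_add, smul_smul,
    sub_add_eq_sub_sub, map_smul, smul_eq_mul,
    show 2 * B y γ / B γ γ * m = m * (2 / B γ γ * B y γ) by ring]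

end Reflection

theorem stmt_12_general {V : Type*} [AddCommGroup V] [Module ℝ V]
    (B : LinearMap.BilinForm ℝ V) (hsym : ∀ x y, B x y = B y x)
    {n : ℕ} (γ : Fin n → V)
    (a : V) (ha : ∀ w, B a w = 0) (m : Fin n → ℤ) (x : V) :
    ((List.ofFn fun i => reflVec B (γ i + m i • a)).foldl (fun acc f => f ∘ acc) id) x
      = ((List.ofFn fun i => reflVec B (γ i)).foldl (fun acc f => f ∘ acc) id) x
        - (∑ i : Fin n, (m i : ℝ) *
            B x ((((List.ofFn fun j => reflVec B (γ j)).take (i : ℕ)).foldr (· ∘ ·) id)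
              (sharpVec B (γ i)))) • a := by
  induction n generalizing x with
  | zero => simp
  | succ n ih =>
    have hshift : ∀ F ∈ List.ofFn fun i : Fin n => reflVec B (γ i.succ + m i.succ • a),
        ∀ y (c : ℝ), F (y - c • a) = F y - c • a := by
      intro F hF y c
      obtain ⟨i, rfl⟩ := List.mem_ofFn.mp hF
      exact reflVec_sub_smul B (ha _) y c
    rw [List.ofFn_succ, List.ofFn_succ, List.foldl_comp_cons, List.foldl_comp_cons,
      Function.comp_apply, Function.comp_apply, reflVec_add_zsmul B hsym ha,
      List.foldl_comp_apply_sub _ _ (fun F hF y => hshift F hF y _),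
      ih (fun i => γ i.succ) (fun i => m i.succ), Fin.sum_univ_succ]
    simp only [Fin.val_zero, List.take_zero, List.foldr_nil, id_eq, Fin.val_succ,
      List.take_succ_cons, List.foldr_cons, Function.comp_apply, reflVec_apply_left B hsym]
    rw [sub_sub, ← add_smul, add_comm ((m 0 : ℝ) * _)]

/-- For non-isotropic `γ₁,…,γₙ`, `a ∈ Rad(B)` and integers `m₁,…,mₙ`:
`s_{γₙ+mₙa} ∘ ⋯ ∘ s_{γ₁+m₁a}(x) = s_{γₙ} ∘ ⋯ ∘ s_{γ₁}(x)
  − (Σᵢ mᵢ · B(x, s_{γ₁}⋯s_{γ_{i−1}}(γᵢ^♯))) • a`. -/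
theorem stmt_12 {V : Type*} [AddCommGroup V] [Module ℝ V]
    (B : LinearMap.BilinForm ℝ V) (hsym : ∀ x y, B x y = B y x)
    {n : ℕ} (γ : Fin n → V) (hiso : ∀ i, B (γ i) (γ i) ≠ 0)
    (a : V) (ha : ∀ w, B a w = 0) (m : Fin n → ℤ) (x : V) :
    ((List.ofFn fun i => reflVec B (γ i + m i • a)).foldl (fun acc f => f ∘ acc) id) x
      = ((List.ofFn fun i => reflVec B (γ i)).foldl (fun acc f => f ∘ acc) id) x
        - (∑ i : Fin n, (m i : ℝ) *
            B x ((((List.ofFn fun j => reflVec B (γ j)).take (i : ℕ)).foldr (· ∘ ·) id)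
              (sharpVec B (γ i)))) • a :=
  stmt_12_general B hsym γ a ha m x
end

section
/- Let V ⊆ Ṽ be real vector spaces with dim Ṽ = dim V + 1, let B̃ be a symmetric bilinear form on Ṽ with restriction B to V, and suppose Rad(B̃) = 0 while dim Rad(B) = 1. Then any isometry w̃ of (Ṽ,B̃) that fixes V pointwise is the identity on Ṽ. -/
/-!
Since `w` is an isometry fixing `V`, every displacement `w x - x` is orthogonal to `V`. By
nondegeneracy `V^⊥` is a line, and it contains the radical vector `v` of `V`, so
`w x = x + f x • v`. As `v` is isotropic, expanding `B (w x) (w y) = B x y` gives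
`f x * B v y + f y * B v x = 0`. Taking `x = y = y₀` with `B v y₀ ≠ 0` forces `f y₀ = 0`,
and then taking `y = y₀` forces `f x = 0` for every `x`.
-/

open Module Submodule

namespace LinearMap.BilinForm

section CommRing

variable {R M : Type*} [CommRing R] [AddCommGroup M] [Module R M] {B : LinearMap.BilinForm R M}

theorem apply_sub_self_mem_orthogonal {V : Submodule R M} {w : M → M}
    (hw : ∀ x y, B (w x) (w y) = B x y) (hfix : ∀ x ∈ V, w x = x) (x : M) :
    w x - x ∈ B.orthogonal V := by
  intro n hn
  change B n (w x - x) = 0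
  rw [map_sub, ← hw n x, hfix n hn, sub_self]

theorem apply_add_smul_add_smul_of_isotropic (hB : B.IsSymm) {v : M} (hvv : B v v = 0)
    (x y : M) (c d : R) :
    B (x + c • v) (y + d • v) = B x y + c * B v y + d * B v x := by
  simp only [map_add, map_smul, LinearMap.add_apply, LinearMap.smul_apply, smul_eq_mul, hvv,
    hB.eq x v]
  ring

variable [IsDomain R] [NeZero (2 : R)]

theorem eq_self_of_isometry_of_sub_mem_span_isotropic (hB : B.IsSymm) {v : M} (hvv : B v v = 0)
    (hv : B v ≠ 0) {w : M → M} (hw : ∀ x y, B (w x) (w y) = B x y)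
    (hspan : ∀ x, w x - x ∈ R ∙ v) (x : M) : w x = x := by
  have hshift : ∀ x, ∃ c : R, w x = x + c • v := fun x => by
    obtain ⟨c, hc⟩ := mem_span_singleton.mp (hspan x)
    exact ⟨c, by rw [hc, add_sub_cancel]⟩
  have hcross : ∀ x y (c d : R), w x = x + c • v → w y = y + d • v →
      c * B v y + d * B v x = 0 := by
    intro x y c d hx hy
    have h := hw x y
    rw [hx, hy, apply_add_smul_add_smul_of_isotropic hB hvv] at h
    linear_combination h
  obtain ⟨y₀, hy₀⟩ : ∃ y₀, B v y₀ ≠ 0 := by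
    by_contra! h
    exact hv (LinearMap.ext h)
  obtain ⟨d, hd⟩ := hshift y₀
  have hd0 : d = 0 := by
    have h : (2 * d) * B v y₀ = 0 := by linear_combination hcross y₀ y₀ d d hd hd
    exact (mul_eq_zero.mp ((mul_eq_zero.mp h).resolve_right hy₀)).resolve_left two_ne_zero
  obtain ⟨c, hc⟩ := hshift x
  have hc0 : c = 0 := by
    have h := hcross x y₀ c 0 hc (by rw [hd, hd0])
    rwa [zero_mul, add_zero, mul_eq_zero, or_iff_left hy₀] at h
  rw [hc, hc0, zero_smul, add_zero]

end CommRing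

theorem orthogonal_eq_span_singleton {K M : Type*} [Field K] [AddCommGroup M] [Module K M]
    [FiniteDimensional K M] {B : LinearMap.BilinForm K M} (hB : B.Nondegenerate) {V : Submodule K M}
    (hdim : finrank K M = finrank K V + 1) {v : M} (hv : v ∈ B.orthogonal V) (hv0 : v ≠ 0) :
    B.orthogonal V = K ∙ v := by
  refine (eq_of_le_of_finrank_le ((span_singleton_le_iff_mem v _).mpr hv) ?_).symm
  rw [finrank_orthogonal hB, finrank_span_singleton hv0]
  omega

end LinearMap.BilinForm

/-- Let `V ⊆ W` with `dim W = dim V + 1`, let `B` be a symmetric bilinear form on `W`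
with `Rad(B) = 0` whose restriction to `V` has one-dimensional radical. Then any
isometry of `(W, B)` fixing `V` pointwise is the identity. -/
theorem stmt_14 {W : Type*} [AddCommGroup W] [Module ℝ W] [FiniteDimensional ℝ W]
    (V : Submodule ℝ W)
    (hdim : Module.finrank ℝ W = Module.finrank ℝ V + 1)
    (B : LinearMap.BilinForm ℝ W) (hsym : ∀ x y, B x y = B y x)
    (hnd : ∀ x : W, (∀ y, B x y = 0) → x = 0)
    (hrad : ∃ v ∈ V, v ≠ 0 ∧ (∀ u ∈ V, B v u = 0) ∧
      ∀ u ∈ V, (∀ u' ∈ V, B u u' = 0) → ∃ c : ℝ, u = c • v)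
    (w : W ≃ₗ[ℝ] W) (hw : ∀ x y, B (w x) (w y) = B x y)
    (hfix : ∀ x ∈ V, w x = x) :
    ∀ x : W, w x = x := by
  obtain ⟨v, hvV, hv0, hvperp, -⟩ := hrad
  have hB : B.IsSymm := ⟨hsym⟩
  have hnondeg : B.Nondegenerate :=
    (LinearMap.IsRefl.nondegenerate_iff_separatingLeft hB.isRefl).mpr hnd
  have hvorth : v ∈ B.orthogonal V := fun u hu => (hsym u v).trans (hvperp u hu)
  have hspan := LinearMap.BilinForm.orthogonal_eq_span_singleton hnondeg hdim hvorth hv0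
  have hvrad : B v ≠ 0 := fun h => hv0 (hnd v fun y => by rw [h, LinearMap.zero_apply])
  refine LinearMap.BilinForm.eq_self_of_isometry_of_sub_mem_span_isotropic hB (hvperp v hvV)
    hvrad hw fun x => ?_
  rw [← hspan]
  exact LinearMap.BilinForm.apply_sub_self_mem_orthogonal hw hfix x
end

section
/- Let A = ⊔_{r=1}^n A_r arise from an exceptional datum {E_r, A_r, μ_r}. Define a' ≤ a iff there exist 1 ≤ r ≤ s ≤ n and (e₁,…,eₙ) ∈ Eₙ with μ_r(e₁,…,e_r) = a' and μ_s(e₁,…,e_s) = a. Then ≤ is a partial order on A (reflexive, antisymmetric, transitive). -/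
/-- Given an exceptional datum `{E_r, A_r, μ_r}` (with `E_r` the set of length-`r`
prefixes of the distinguished `n`-tuples `Eₙ`, and `μ_r : E_r ↠ A_r` surjections
satisfying the extension-compatibility property), the relation
`a' ≤ a ⇔ ∃ 1 ≤ r ≤ s ≤ n and (e₁,…,eₙ) ∈ Eₙ with μ_r(e₁,…,e_r) = a' and
μ_s(e₁,…,e_s) = a` is a partial order on `A = ⊔_{r=1}^n A_r` (realized as a sigma
type, so the `A_r` are pairwise disjoint). -/
theorem stmt_15 {E : Type*} (n : ℕ) (En : Set (Fin n → E))
    (A : ℕ → Type*) (μ : ∀ r, (Fin r → E) → A r)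
    (Er : ∀ r, Set (Fin r → E))
    (hEr : ∀ (r : ℕ) (h : r ≤ n),
      Er r = {e | ∃ f ∈ En, ∀ i : Fin r, e i = f (Fin.castLE h i)})
    (hsurj : ∀ r, 1 ≤ r → r ≤ n → ∀ a : A r, ∃ e ∈ Er r, μ r e = a)
    (hC2 : ∀ (r : ℕ) (h : r ≤ n), ∀ f ∈ En, ∀ e' ∈ Er r,
      ((fun i : Fin n => if hi : (i : ℕ) < r then e' ⟨i, hi⟩ else f i) ∈ En
        ↔ μ r (fun i => f (Fin.castLE h i)) = μ r e')) :
    IsPartialOrder {a : Σ r : ℕ, A r // 1 ≤ a.1 ∧ a.1 ≤ n}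
      (fun a' a => ∃ (hrs : a'.1.1 ≤ a.1.1) (f : Fin n → E), f ∈ En ∧
        μ a'.1.1 (fun i => f (Fin.castLE (le_trans hrs a.2.2) i)) = a'.1.2 ∧
        μ a.1.1 (fun i => f (Fin.castLE a.2.2 i)) = a.1.2) := by
  have hpre : ∀ (r : ℕ) (h : r ≤ n) (f : Fin n → E), f ∈ En →
      (fun i : Fin r => f (Fin.castLE h i)) ∈ Er r := by
    intro r h f hf
    rw [hEr r h]
    exact ⟨f, hf, fun i => rfl⟩
  refine { refl := ?_, trans := ?_, antisymm := ?_ }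
  · rintro ⟨⟨r, x⟩, h1, h2⟩
    obtain ⟨e, he, hμ⟩ := hsurj r h1 h2 x
    rw [hEr r h2] at he
    obtain ⟨f, hf, hef⟩ := he
    refine ⟨le_refl r, f, hf, ?_, ?_⟩ <;>
      · dsimp only
        rw [← hμ]
        congr 1
        exact funext fun i => (hef i).symm
  · rintro ⟨⟨r, x⟩, hr1, hrn⟩ ⟨⟨s, y⟩, hs1, hsn⟩ ⟨⟨t, z⟩, ht1, htn⟩
      ⟨hrs, f, hf, hfr, hfs⟩ ⟨hst, g, hg, hgs, hgt⟩
    dsimp only at *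
    -- splice f's length-s prefix onto g
    set h : Fin n → E := fun i : Fin n => if hi : (i : ℕ) < s then f ⟨i, lt_of_lt_of_le hi hsn⟩ else g i with hh
    have hfs' : (fun i : Fin s => f (Fin.castLE hsn i)) ∈ Er s := hpre s hsn f hf
    have hmem : h ∈ En := by
      rw [hh]
      exact (hC2 s hsn g hg _ hfs').mpr (by rw [hgs, ← hfs])
    refine ⟨le_trans hrs hst, h, hmem, ?_, ?_⟩
    · rw [← hfr]
      congr 1
      funext i
      simp only [hh]
      rw [dif_pos (show ((Fin.castLE (le_trans hrs hsn) i : Fin n) : ℕ) < s from lt_of_lt_of_le i.2 hrs)]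
    · -- μ t prefix of h = μ t prefix of g = z
      have hht : (fun i : Fin t => h (Fin.castLE htn i)) ∈ Er t := hpre t htn h hmem
      have := (hC2 t htn g hg _ hht).mp ?_
      · rw [← hgt, this]
      · -- spliced tuple equals h
        have : (fun i : Fin n => if hi : (i : ℕ) < t then
            (fun j : Fin t => h (Fin.castLE htn j)) ⟨i, hi⟩ else g i) = h := by
          funext i
          by_cases hi : (i : ℕ) < t
          · rw [dif_pos hi]; rfl
          · rw [dif_neg hi]
            simp only [hh]
            rw [dif_neg (fun hlt => hi (lt_of_lt_of_le hlt hst))]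
        rw [this]; exact hmem
  · rintro ⟨⟨r, x⟩, hr1, hrn⟩ ⟨⟨s, y⟩, hs1, hsn⟩ ⟨hrs, f, hf, hfr, hfs⟩ ⟨hsr, g, hg, hgs, hgr⟩
    dsimp only at *
    have hrseq : r = s := le_antisymm hrs hsr
    subst hrseq
    have : x = y := by rw [← hfr, ← hfs]
    subst this
    rfl
end
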